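/- Fix d ∈ {1,2,3,7,11} and let L ⊂ ℂ be a wall line, i.e., one of the lines ℝ, ℝ + ω_d, ℝ·ω_d, ℝ·ω_d + 1 if d ∈ {1,2}, or one of the lines ℝ, ℝ·ω_d, and the line through 1 and ω_d if d ∈ {3,7,11}. Let p₁,q₁,p₂,q₂ ∈ ℤ[ω_d] with p₁,q₁ coprime, p₂,q₂ coprime, q₁ ≠ 0, q₂ ≠ 0, and |p₁q₂ − p₂q₁| < 2·Im(ω_d)/|ω_d|. Then p₁/q₁ and p₂/q₂ lie in one common closed half-plane of ℂ bounded by L; consequently the hyperbolic geodesic of the upper half-space with endpoints p₁/q₁ and p₂/q₂ cannot cross the wall L × ℝ₊. -/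

import Mathlib

/-- `ω_d`: the generator of the ring of integers of `ℚ(√(-d))`. -/
noncomputable def omegaD (d : ℕ) : ℂ :=
  if d % 4 = 3 then (1 + Complex.I * Real.sqrt d) / 2 else Complex.I * Real.sqrt d

/-- The ring of integers `ℤ[ω_d]` of `ℚ(√(-d))`, as a subset of `ℂ`. -/
def ringInt (d : ℕ) : Set ℂ := {z | ∃ a b : ℤ, z = (a : ℂ) + (b : ℂ) * omegaD d}

/-- `p` and `q` are coprime in `ℤ[ω_d]`. -/
def CoprimeIn (d : ℕ) (p q : ℂ) : Prop :=
  ∃ u v : ℂ, u ∈ ringInt d ∧ v ∈ ringInt d ∧ u * p + v * q = 1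

/-- `x` is an element of the field `ℚ(√(-d)) ⊆ ℂ`. -/
def inK (d : ℕ) (x : ℂ) : Prop :=
  ∃ p q : ℂ, p ∈ ringInt d ∧ q ∈ ringInt d ∧ q ≠ 0 ∧ x = p / q

/-- The point `p/q` of `ℂ ∪ {∞}`, with `p/0 = ∞`. -/
noncomputable def divC (p q : ℂ) : OnePoint ℂ :=
  if q = 0 then OnePoint.infty else ((p / q : ℂ) : OnePoint ℂ)

/-- Two points of `ℚ(√(-d)) ∪ {∞}` are Farey neighbours (joined by an edge of
the Farey graph `E_d`) if they have coprime representations `p₁/q₁`, `p₂/q₂`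
with `|p₁q₂ − p₂q₁| = 1`. -/
def FareyAdj (d : ℕ) (x y : OnePoint ℂ) : Prop :=
  ∃ p₁ q₁ p₂ q₂ : ℂ, p₁ ∈ ringInt d ∧ q₁ ∈ ringInt d ∧ p₂ ∈ ringInt d ∧ q₂ ∈ ringInt d ∧
    CoprimeIn d p₁ q₁ ∧ CoprimeIn d p₂ q₂ ∧ x = divC p₁ q₁ ∧ y = divC p₂ q₂ ∧
    ‖p₁ * q₂ - p₂ * q₁‖ = 1

/-- `f 0 → f 1 → ⋯ → f n` is a walk (of length `n`) in the Farey graph `E_d`. -/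
def IsWalk (d n : ℕ) (f : ℕ → OnePoint ℂ) : Prop := ∀ k, k < n → FareyAdj d (f k) (f (k + 1))

/-- `f 0 → ⋯ → f n` is a geodesic path in `E_d`: a walk of minimal length
among all walks with the same endpoints. -/
def IsGeodesicWalk (d n : ℕ) (f : ℕ → OnePoint ℂ) : Prop :=
  IsWalk d n f ∧ ∀ (m : ℕ) (g : ℕ → OnePoint ℂ), IsWalk d m g → g 0 = f 0 → g m = f n → n ≤ m

/-- Numerators of the convergents of `[a₁, a₂, …]` (`a 0` is unused):
`p₀ = 0`, `p₁ = 1`, `p_k = a_k p_{k−1} + p_{k−2}`. -/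
noncomputable def cfP (a : ℕ → ℂ) : ℕ → ℂ
  | 0 => 0
  | 1 => 1
  | (k + 2) => a (k + 2) * cfP a (k + 1) + cfP a k

/-- Denominators of the convergents of `[a₁, a₂, …]`:
`q₀ = 1`, `q₁ = a₁`, `q_k = a_k q_{k−1} + q_{k−2}`. -/
noncomputable def cfQ (a : ℕ → ℂ) : ℕ → ℂ
  | 0 => 1
  | 1 => a 1
  | (k + 2) => a (k + 2) * cfQ a (k + 1) + cfQ a k

/-- The walk `∞ → p₀/q₀ = 0 → p₁/q₁ → ⋯` along the convergents of `[a₁, a₂, …]`. -/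
noncomputable def cfWalk (a : ℕ → ℂ) : ℕ → OnePoint ℂ :=
  fun k => if k = 0 then OnePoint.infty else divC (cfP a (k - 1)) (cfQ a (k - 1))

/-- The hyperbolic geodesic of the upper half-space `ℂ × ℝ₊` with distinct
finite endpoints `α, β ∈ ℂ`: the open Euclidean semicircle above the segment
from `α` to `β`. -/
def geoSet (α β : ℂ) : Set (ℂ × ℝ) :=
  {w | 0 < w.2 ∧ (∃ s : ℝ, 0 < s ∧ s < 1 ∧ w.1 = (1 - (s : ℂ)) * α + (s : ℂ) * β) ∧
    ‖w.1 - (α + β) / 2‖ ^ 2 + w.2 ^ 2 = ‖α - β‖ ^ 2 / 4}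

/-- The wall lines of the fundamental polygon, each given by a base point `z₀`
and a direction `v`, the line being `{z₀ + r·v : r ∈ ℝ}`: the lines `ℝ`,
`ℝ + ω_d`, `ℝ·ω_d`, `ℝ·ω_d + 1` for `d ∈ {1,2}`, and the lines `ℝ`, `ℝ·ω_d`
and the line through `1` and `ω_d` for `d ∈ {3,7,11}`. -/
def wallParams (d : ℕ) : Set (ℂ × ℂ) :=
  if d % 4 = 3 then {((0 : ℂ), (1 : ℂ)), (0, omegaD d), (1, omegaD d - 1)}
  else {((0 : ℂ), (1 : ℂ)), (omegaD d, 1), (0, omegaD d), (1, omegaD d)}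

/-! Let `s(z) = Im((z - z₀)/v)`, so that `s(z)|v|` is the signed distance from `z` to the wall
`z₀ + ℝv`. Since `Im((a + bω)·conj(c + eω)) = (bc - ae) Im ω` and
`(p/q - z₀)/v = (p - z₀q)/(vq)` with `z₀, v ∈ ℤ[ω_d]`, a point `p/q` off the wall has
`|s(p/q)| ≥ Im ω_d / (|v|²|q|²)`. If `p₁/q₁` and `p₂/q₂` lay strictly on opposite sides, then
`|p₁q₂ - p₂q₁| / (|q₁||q₂|) = |p₁/q₁ - p₂/q₂| ≥ |v| (s(p₁/q₁) - s(p₂/q₂))`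
`≥ (Im ω_d / |v|)(1/|q₁|² + 1/|q₂|²) ≥ 2 Im ω_d / (|v||q₁||q₂|)` by AM-GM, so
`|p₁q₂ - p₂q₁| ≥ 2 Im ω_d / |v| ≥ 2 Im ω_d / |ω_d|`, as every wall direction has `|v| ≤ |ω_d|`.
The geodesic lies over the segment between its endpoints, hence in their common half-plane. -/

open Complex ComplexConjugate

lemma omegaD_mem_ringInt (d : ℕ) : omegaD d ∈ ringInt d := ⟨0, 1, by simp⟩

lemma omegaD_im_nonneg (d : ℕ) : 0 ≤ (omegaD d).im := by
  unfold omegaD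
  split_ifs
  · simp only [div_ofNat_im, add_im, one_im, mul_im, I_re, ofReal_im, mul_zero, I_im, ofReal_re,
      one_mul, zero_add]
    positivity
  · simp only [mul_im, I_re, ofReal_im, mul_zero, I_im, ofReal_re, one_mul, zero_add,
      Real.sqrt_nonneg]

lemma one_le_norm_omegaD {d : ℕ} (hd : 0 < d) : 1 ≤ ‖omegaD d‖ := by
  have hsqrt := Real.mul_self_sqrt (d.cast_nonneg : (0 : ℝ) ≤ d)
  have hd' : (1 : ℝ) ≤ d := by exact_mod_cast hd
  rw [← one_le_sq_iff₀ (norm_nonneg _), ← normSq_eq_norm_sq, normSq_apply]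
  unfold omegaD
  split_ifs with h3
  · have : (3 : ℝ) ≤ d := by exact_mod_cast (show 3 ≤ d by omega)
    simp only [div_ofNat_re, add_re, one_re, mul_re, I_re, ofReal_re, zero_mul, I_im, ofReal_im,
      mul_zero, sub_self, add_zero, div_ofNat_im, add_im, one_im, mul_im, one_mul, zero_add]
    nlinarith
  · simp only [mul_re, I_re, ofReal_re, zero_mul, I_im, ofReal_im, mul_zero, sub_self, mul_im,
      one_mul, zero_add, hsqrt, hd']

lemma norm_omegaD_sub_one {d : ℕ} (hd : d % 4 = 3) : ‖omegaD d - 1‖ = ‖omegaD d‖ := by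
  have hconj : omegaD d - 1 = -conj (omegaD d) := by
    simp only [omegaD, hd, if_true, map_div₀, map_add, map_one, map_mul, conj_I, conj_ofReal,
      map_ofNat]
    ring
  rw [hconj, norm_neg, norm_conj]

lemma omegaD_mul_self_mem_ringInt (d : ℕ) : omegaD d * omegaD d ∈ ringInt d := by
  have hsqrt : (Real.sqrt d : ℂ) * Real.sqrt d = d := by
    rw [← ofReal_mul, Real.mul_self_sqrt d.cast_nonneg, ofReal_natCast]
  by_cases hd : d % 4 = 3
  · obtain ⟨k, rfl⟩ : ∃ k, d = 4 * k + 3 := ⟨d / 4, by omega⟩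
    refine ⟨-(k + 1 : ℤ), 1, ?_⟩
    simp only [omegaD, hd, if_true]
    push_cast at hsqrt ⊢
    linear_combination (Real.sqrt (4 * k + 3) * Real.sqrt (4 * k + 3) / 4 : ℂ) * I_mul_I
      - hsqrt / 4
  · refine ⟨-(d : ℤ), 0, ?_⟩
    simp only [omegaD, hd, if_false]
    push_cast
    linear_combination (Real.sqrt d * Real.sqrt d : ℂ) * I_mul_I - hsqrt

def ringIntSubring (d : ℕ) : Subring ℂ where
  carrier := ringInt d
  zero_mem' := ⟨0, 0, by simp⟩
  one_mem' := ⟨1, 0, by simp⟩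
  add_mem' := by
    rintro _ _ ⟨a, b, rfl⟩ ⟨c, e, rfl⟩
    exact ⟨a + c, b + e, by push_cast; ring⟩
  neg_mem' := by
    rintro _ ⟨a, b, rfl⟩
    exact ⟨-a, -b, by push_cast; ring⟩
  mul_mem' := by
    rintro _ _ ⟨a, b, rfl⟩ ⟨c, e, rfl⟩
    obtain ⟨t, s, hts⟩ := omegaD_mul_self_mem_ringInt d
    exact ⟨a * c + b * e * t, a * e + b * c + b * e * s,
      by push_cast; linear_combination b * e * hts⟩

lemma exists_im_mul_conj_eq_intCast_mul {d : ℕ} {P Q : ℂ} (hP : P ∈ ringInt d)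
    (hQ : Q ∈ ringInt d) : ∃ n : ℤ, (P * conj Q).im = n * (omegaD d).im := by
  obtain ⟨a, b, rfl⟩ := hP
  obtain ⟨c, e, rfl⟩ := hQ
  refine ⟨b * c - a * e, ?_⟩
  simp only [map_add, map_intCast, map_mul, mul_im, add_re, intCast_re, mul_re, intCast_im,
    zero_mul, sub_zero, add_im, conj_im, mul_neg, conj_re, add_zero, zero_add, neg_zero,
    Int.cast_sub, Int.cast_mul]
  ring

lemma le_intCast_mul_of_pos {n : ℤ} {c : ℝ} (h : 0 < n * c) : c ≤ n * c := by
  rcases lt_trichotomy c 0 with hc | rfl | hc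
  · linarith
  · simp at h
  · have hn : (1 : ℝ) ≤ n := by exact_mod_cast (pos_of_mul_pos_left h hc.le : (0 : ℝ) < n)
    nlinarith

lemma omegaD_im_le_im_div_mul_normSq {d : ℕ} {P Q : ℂ} (hP : P ∈ ringInt d)
    (hQ : Q ∈ ringInt d) (h : 0 < (P / Q).im) : (omegaD d).im ≤ (P / Q).im * normSq Q := by
  have hQ0 : 0 < normSq Q := normSq_pos.2 (by rintro rfl; simp at h)
  have him : (P / Q).im * normSq Q = (P * conj Q).im := by
    rw [div_im, mul_im, conj_re, conj_im]; field_simp; ring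
  obtain ⟨n, hn⟩ := exists_im_mul_conj_eq_intCast_mul hP hQ
  rw [him, hn]
  exact le_intCast_mul_of_pos (hn ▸ him ▸ mul_pos h hQ0)

lemma omegaD_im_le_im_sub_div_mul_sq {d : ℕ} {z₀ v p q : ℂ} (hz₀ : z₀ ∈ ringInt d)
    (hv : v ∈ ringInt d) (hp : p ∈ ringInt d) (hq : q ∈ ringInt d) (hq0 : q ≠ 0)
    (h : 0 < ((p / q - z₀) / v).im) :
    (omegaD d).im ≤ ((p / q - z₀) / v).im * ‖v‖ ^ 2 * ‖q‖ ^ 2 := by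
  have hv0 : v ≠ 0 := by rintro rfl; simp at h
  have hform : (p / q - z₀) / v = (p - z₀ * q) / (v * q) := by field_simp
  have hP : p - z₀ * q ∈ ringIntSubring d :=
    (ringIntSubring d).sub_mem hp ((ringIntSubring d).mul_mem hz₀ hq)
  have hQ : v * q ∈ ringIntSubring d := (ringIntSubring d).mul_mem hv hq
  rw [hform] at h ⊢
  rw [mul_assoc, ← mul_pow, ← norm_mul, ← normSq_eq_norm_sq]
  exact omegaD_im_le_im_div_mul_normSq hP hQ h

lemma two_mul_le_add_mul_mul {a b c x y : ℝ} (hc : 0 ≤ c) (hx : 0 < x) (hy : 0 < y)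
    (ha : c ≤ a * x ^ 2) (hb : c ≤ b * y ^ 2) : 2 * c ≤ (a + b) * x * y := by
  have hxy := mul_pos hx hy
  refine le_of_mul_le_mul_right ?_ hxy
  nlinarith [mul_le_mul_of_nonneg_right ha (sq_nonneg y),
    mul_le_mul_of_nonneg_right hb (sq_nonneg x), mul_nonneg hc (sq_nonneg (x - y))]

lemma two_mul_omegaD_im_le_of_im_pos_of_im_neg {d : ℕ} {z₀ v p₁ q₁ p₂ q₂ : ℂ}
    (hz₀ : z₀ ∈ ringInt d) (hv : v ∈ ringInt d)
    (hp₁ : p₁ ∈ ringInt d) (hq₁ : q₁ ∈ ringInt d) (hp₂ : p₂ ∈ ringInt d) (hq₂ : q₂ ∈ ringInt d)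
    (hq₁0 : q₁ ≠ 0) (hq₂0 : q₂ ≠ 0)
    (h₁ : 0 < ((p₁ / q₁ - z₀) / v).im) (h₂ : ((p₂ / q₂ - z₀) / v).im < 0) :
    2 * (omegaD d).im ≤ ‖p₁ * q₂ - p₂ * q₁‖ * ‖v‖ := by
  set f₁ := ((p₁ / q₁ - z₀) / v).im
  set f₂ := ((p₂ / q₂ - z₀) / v).im
  have hv0 : v ≠ 0 := by rintro rfl; simp [f₁] at h₁
  have k₁ := omegaD_im_le_im_sub_div_mul_sq hz₀ hv hp₁ hq₁ hq₁0 h₁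
  have k₂ := omegaD_im_le_im_sub_div_mul_sq hz₀ ((ringIntSubring d).neg_mem hv) hp₂ hq₂
    hq₂0 (by rwa [div_neg, neg_im, neg_pos])
  rw [div_neg, neg_im, norm_neg] at k₂
  have hsep : (f₁ - f₂) * (‖v‖ * ‖q₁‖ * ‖q₂‖) ≤ ‖p₁ * q₂ - p₂ * q₁‖ := by
    have hdiff : f₁ - f₂ = ((p₁ * q₂ - p₂ * q₁) / (v * q₁ * q₂)).im := by
      rw [← sub_im]; congr 1; field_simp; ring
    rw [← le_div_iff₀ (by positivity), hdiff, ← norm_mul, ← norm_mul, ← norm_div]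
    exact im_le_norm _
  calc 2 * (omegaD d).im ≤ (f₁ * ‖v‖ ^ 2 + -f₂ * ‖v‖ ^ 2) * ‖q₁‖ * ‖q₂‖ :=
        two_mul_le_add_mul_mul (omegaD_im_nonneg d) (norm_pos_iff.2 hq₁0)
          (norm_pos_iff.2 hq₂0) k₁ k₂
    _ = (f₁ - f₂) * (‖v‖ * ‖q₁‖ * ‖q₂‖) * ‖v‖ := by ring
    _ ≤ ‖p₁ * q₂ - p₂ * q₁‖ * ‖v‖ := by gcongr

lemma im_sub_div_mul_im_sub_div_nonneg {d : ℕ} {z₀ v p₁ q₁ p₂ q₂ : ℂ}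
    (hz₀ : z₀ ∈ ringInt d) (hv : v ∈ ringInt d)
    (hp₁ : p₁ ∈ ringInt d) (hq₁ : q₁ ∈ ringInt d) (hp₂ : p₂ ∈ ringInt d) (hq₂ : q₂ ∈ ringInt d)
    (hq₁0 : q₁ ≠ 0) (hq₂0 : q₂ ≠ 0)
    (hdet : ‖p₁ * q₂ - p₂ * q₁‖ * ‖v‖ < 2 * (omegaD d).im) :
    0 ≤ ((p₁ / q₁ - z₀) / v).im * ((p₂ / q₂ - z₀) / v).im := by
  by_contra! hneg
  rcases mul_neg_iff.1 hneg with ⟨h₁, h₂⟩ | ⟨h₁, h₂⟩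
  · exact hdet.not_ge <|
      two_mul_omegaD_im_le_of_im_pos_of_im_neg hz₀ hv hp₁ hq₁ hp₂ hq₂ hq₁0 hq₂0 h₁ h₂
  · rw [norm_sub_rev] at hdet
    exact hdet.not_ge <|
      two_mul_omegaD_im_le_of_im_pos_of_im_neg hz₀ hv hp₂ hq₂ hp₁ hq₁ hq₂0 hq₁0 h₂ h₁

lemma im_sub_div_nonneg_of_mem_geoSet {z₀ v α β : ℂ} {w : ℂ × ℝ} (hw : w ∈ geoSet α β)
    (hα : 0 ≤ ((α - z₀) / v).im) (hβ : 0 ≤ ((β - z₀) / v).im) : 0 ≤ ((w.1 - z₀) / v).im := by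
  obtain ⟨-, ⟨s, hs0, hs1, hw1⟩, -⟩ := hw
  have hcomb :
      (w.1 - z₀) / v = ((1 - s : ℝ) : ℂ) * ((α - z₀) / v) + (s : ℂ) * ((β - z₀) / v) := by

    rw [hw1]; push_cast; ring
  rw [hcomb, add_im, im_ofReal_mul, im_ofReal_mul]
  have : 0 ≤ 1 - s := by linarith
  positivity

lemma im_sub_div_nonpos_of_mem_geoSet {z₀ v α β : ℂ} {w : ℂ × ℝ} (hw : w ∈ geoSet α β)
    (hα : ((α - z₀) / v).im ≤ 0) (hβ : ((β - z₀) / v).im ≤ 0) : ((w.1 - z₀) / v).im ≤ 0 := by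
  simpa [div_neg] using im_sub_div_nonneg_of_mem_geoSet (v := -v) hw
    (by simpa [div_neg] using hα) (by simpa [div_neg] using hβ)

lemma mem_ringInt_and_norm_le_of_mem_wallParams {d : ℕ} (hd : 0 < d) {z₀ v : ℂ}
    (hw : (z₀, v) ∈ wallParams d) :
    z₀ ∈ ringInt d ∧ v ∈ ringInt d ∧ ‖v‖ ≤ ‖omegaD d‖ := by
  have h0 : (0 : ℂ) ∈ ringInt d := (ringIntSubring d).zero_mem
  have h1 : (1 : ℂ) ∈ ringInt d := (ringIntSubring d).one_mem
  have hω := omegaD_mem_ringInt d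
  have hnorm1 : ‖(1 : ℂ)‖ ≤ ‖omegaD d‖ := norm_one (α := ℂ) ▸ one_le_norm_omegaD hd
  unfold wallParams at hw
  split_ifs at hw with h3 <;>
    simp only [Set.mem_insert_iff, Set.mem_singleton_iff, Prod.mk.injEq] at hw
  · rcases hw with ⟨rfl, rfl⟩ | ⟨rfl, rfl⟩ | ⟨rfl, rfl⟩
    · exact ⟨h0, h1, hnorm1⟩
    · exact ⟨h0, hω, le_rfl⟩
    · exact ⟨h1, (ringIntSubring d).sub_mem hω h1, (norm_omegaD_sub_one h3).le⟩
  · rcases hw with ⟨rfl, rfl⟩ | ⟨rfl, rfl⟩ | ⟨rfl, rfl⟩ | ⟨rfl, rfl⟩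
    · exact ⟨h0, h1, hnorm1⟩
    · exact ⟨hω, h1, hnorm1⟩
    · exact ⟨h0, hω, le_rfl⟩
    · exact ⟨h1, hω, le_rfl⟩

theorem geodesic_cannot_cross_wall_general (d : ℕ)
    (z₀ v : ℂ) (hw : (z₀, v) ∈ wallParams d)
    (p₁ q₁ p₂ q₂ : ℂ)
    (hp₁ : p₁ ∈ ringInt d) (hq₁ : q₁ ∈ ringInt d)
    (hp₂ : p₂ ∈ ringInt d) (hq₂ : q₂ ∈ ringInt d)
    (hq₁0 : q₁ ≠ 0) (hq₂0 : q₂ ≠ 0)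
    (hdet : ‖p₁ * q₂ - p₂ * q₁‖ <
      2 * (omegaD d).im / ‖omegaD d‖) :
    (0 ≤ ((p₁ / q₁ - z₀) / v).im ∧ 0 ≤ ((p₂ / q₂ - z₀) / v).im ∧
      ∀ w ∈ geoSet (p₁ / q₁) (p₂ / q₂), 0 ≤ ((w.1 - z₀) / v).im) ∨
    (((p₁ / q₁ - z₀) / v).im ≤ 0 ∧ ((p₂ / q₂ - z₀) / v).im ≤ 0 ∧
      ∀ w ∈ geoSet (p₁ / q₁) (p₂ / q₂), ((w.1 - z₀) / v).im ≤ 0) := by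
  have hd : 0 < d := Nat.pos_of_ne_zero <| by
    rintro rfl
    simpa [omegaD] using (norm_nonneg _).trans_lt hdet
  obtain ⟨hz₀, hv, hvω⟩ := mem_ringInt_and_norm_le_of_mem_wallParams hd hw
  have hω : 0 < ‖omegaD d‖ := one_pos.trans_le (one_le_norm_omegaD hd)
  have hdet' : ‖p₁ * q₂ - p₂ * q₁‖ * ‖v‖ < 2 * (omegaD d).im :=
    calc ‖p₁ * q₂ - p₂ * q₁‖ * ‖v‖ ≤ ‖p₁ * q₂ - p₂ * q₁‖ * ‖omegaD d‖ := by gcongr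
      _ < 2 * (omegaD d).im := (lt_div_iff₀ hω).1 hdet
  rcases mul_nonneg_iff.1 (im_sub_div_mul_im_sub_div_nonneg hz₀ hv hp₁ hq₁ hp₂ hq₂ hq₁0 hq₂0
    hdet') with ⟨h₁, h₂⟩ | ⟨h₁, h₂⟩
  · exact Or.inl ⟨h₁, h₂, fun w hw => im_sub_div_nonneg_of_mem_geoSet hw h₁ h₂⟩
  · exact Or.inr ⟨h₁, h₂, fun w hw => im_sub_div_nonpos_of_mem_geoSet hw h₁ h₂⟩

/-- For `d ∈ {1,2,3,7,11}`, a wall line `L = z₀ + ℝ·v`, and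
points `p₁/q₁, p₂/q₂ ∈ ℚ(√(-d))` in coprime lowest terms with
`|p₁q₂ − p₂q₁| < 2·Im(ω_d)/|ω_d|`, the two points lie in a common closed
half-plane bounded by `L`; consequently the hyperbolic geodesic with endpoints
`p₁/q₁` and `p₂/q₂` cannot cross the wall `L × ℝ₊`. -/
theorem geodesic_cannot_cross_wall (d : ℕ) (hd : d ∈ ({1, 2, 3, 7, 11} : Set ℕ))
    (z₀ v : ℂ) (hw : (z₀, v) ∈ wallParams d)
    (p₁ q₁ p₂ q₂ : ℂ)
    (hp₁ : p₁ ∈ ringInt d) (hq₁ : q₁ ∈ ringInt d)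
    (hp₂ : p₂ ∈ ringInt d) (hq₂ : q₂ ∈ ringInt d)
    (hc₁ : CoprimeIn d p₁ q₁) (hc₂ : CoprimeIn d p₂ q₂)
    (hq₁0 : q₁ ≠ 0) (hq₂0 : q₂ ≠ 0)
    (hdet : ‖p₁ * q₂ - p₂ * q₁‖ <
      2 * (omegaD d).im / ‖omegaD d‖) :
    (0 ≤ ((p₁ / q₁ - z₀) / v).im ∧ 0 ≤ ((p₂ / q₂ - z₀) / v).im ∧
      ∀ w ∈ geoSet (p₁ / q₁) (p₂ / q₂), 0 ≤ ((w.1 - z₀) / v).im) ∨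
    (((p₁ / q₁ - z₀) / v).im ≤ 0 ∧ ((p₂ / q₂ - z₀) / v).im ≤ 0 ∧
      ∀ w ∈ geoSet (p₁ / q₁) (p₂ / q₂), ((w.1 - z₀) / v).im ≤ 0) :=
  geodesic_cannot_cross_wall_general d z₀ v hw p₁ q₁ p₂ q₂ hp₁ hq₁ hp₂ hq₂ hq₁0 hq₂0 hdet
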